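/- Let q = p^e with p an odd prime, and assume 2l | e. Set y = (q−1)/(p^l − 1). Let m | (q−1), m_1 = m/gcd(m,y), and let n = rm where 1 ≤ r ≤ (p^l − 1)/m_1. Then for any 1 ≤ k ≤ ⌊(p^l + n)/(p^l + 1)⌋ and any 0 ≤ h ≤ k, there exists an [n+1,k]_q MDS linear code C over F_q whose l-Galois hull Hull_l(C) = C ∩ C^{⊥_l} has dimension exactly h. -/

import Mathlib

open Finset

/-- The Hamming weight of a vector: the number of nonzero coordinates. -/
noncomputable def wt {F : Type*} [Zero F] {n : ℕ} (x : Fin n → F) : ℕ :=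
  Set.ncard {i | x i ≠ 0}

/-- The `l`-Galois dual of a linear code `C ⊆ F^n` over a field `F` of characteristic `p`:
the set of `x` with `∑ i, y i * (x i)^(p^l) = 0` for all codewords `y ∈ C`. -/
def galoisDual (p l : ℕ) [Fact p.Prime] {F : Type*} [Field F] [CharP F p] {n : ℕ}
    (C : Submodule F (Fin n → F)) : Submodule F (Fin n → F) where
  carrier := {x | ∀ y ∈ C, ∑ i, y i * x i ^ p ^ l = 0}
  zero_mem' := by
    intro y _
    have hp : p ^ l ≠ 0 := pow_ne_zero _ (Fact.out (p := p.Prime)).ne_zero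
    simp [zero_pow hp]
  add_mem' := by
    intro a b ha hb y hy
    have h : ∀ i : Fin _, (a + b) i ^ p ^ l = a i ^ p ^ l + b i ^ p ^ l := by
      intro i
      simpa using add_pow_char_pow (a i) (b i) (p := p) (n := l)
    calc ∑ i, y i * (a + b) i ^ p ^ l
        = (∑ i, y i * a i ^ p ^ l) + ∑ i, y i * b i ^ p ^ l := by
          rw [← Finset.sum_add_distrib]; exact Finset.sum_congr rfl fun i _ => by
            rw [h i, mul_add]
      _ = 0 := by rw [ha y hy, hb y hy, add_zero]
  smul_mem' := by
    intro c x hx y hy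
    have h : ∀ i : Fin _, (c • x) i ^ p ^ l = c ^ p ^ l * x i ^ p ^ l := by
      intro i; simp [mul_pow]
    calc ∑ i, y i * (c • x) i ^ p ^ l
        = c ^ p ^ l * ∑ i, y i * x i ^ p ^ l := by
          rw [Finset.mul_sum]; exact Finset.sum_congr rfl fun i _ => by rw [h i]; ring
      _ = 0 := by rw [hx y hy, mul_zero]

/-- The `l`-Galois hull `Hull_l(C) = C ∩ C^{⊥_l}` of a linear code. -/
def galoisHull (p l : ℕ) [Fact p.Prime] {F : Type*} [Field F] [CharP F p] {n : ℕ}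
    (C : Submodule F (Fin n → F)) : Submodule F (Fin n → F) :=
  C ⊓ galoisDual p l C

/-- `C` is an `[n, k]` MDS code: it has dimension `k` and minimum Hamming distance
exactly `n - k + 1`. -/
def IsMDSCode {F : Type*} [Field F] {n : ℕ} (C : Submodule F (Fin n → F)) (k : ℕ) : Prop :=
  Module.finrank F C = k ∧
    (∀ x ∈ C, x ≠ 0 → n - k + 1 ≤ wt x) ∧
    (∃ x ∈ C, x ≠ 0 ∧ wt x = n - k + 1)

/-! The code is a generalized Reed–Solomon code `GRS_k(a, v)` of length `N = n + 1`. With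
`Q = p ^ l` and `u i = ∏_{j ≠ i} (a i - a j)⁻¹` (`nodalWeight`), the `l`-Galois form of two
codewords is `∑ v i ^ (Q + 1) g(a i) f(a i) ^ Q`, and `∑ u i T(a i) = 0` whenever
`deg T < N - 1`: it is the top coefficient of the Lagrange interpolant of `T`. The bound
`k ≤ ⌊(Q + n)/(Q + 1)⌋` gives `deg (g f^Q) < N - 1`. Hence if `v i ^ (Q + 1) = u i` off a set `S`
and `= α u i` on `S`, where `α ≠ 1`, the hull consists of the codewords of the polynomials
vanishing on `a(S)`, and has dimension `k - #S`.

Such weights exist for the nodes `0` and `ρ ^ j μ ^ t` (`j < r`, `t < m`), where `μ` is a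
primitive `m`-th root of unity and `θ = ρ ^ m ∈ 𝔽_Q` has order `(Q - 1) / m₁ ≥ r`. Their nodal
polynomial is `X · s(X ^ m)` with `s = ∏_{j < r} (X - θ ^ j) ∈ 𝔽_Q[X]`, so every `u i`, a value
of its derivative, lies in `𝔽_Q`. As `2l ∣ e`, every element of `𝔽_Q^*` is a `(Q + 1)`-th power
in `𝔽_q`; take `α = -1`. -/

open Polynomial Lagrange

section GRS

variable {F : Type*} [Field F] {n : ℕ}

noncomputable def grsEval (a v : Fin n → F) : F[X] →ₗ[F] Fin n → F where
  toFun f i := v i * f.eval (a i)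
  map_add' f g := by ext i; simp [mul_add]
  map_smul' c f := by ext i; simp [mul_left_comm]

@[simp]
lemma grsEval_apply (a v : Fin n → F) (f : F[X]) (i : Fin n) :
    grsEval a v f i = v i * f.eval (a i) := rfl

noncomputable def grsCode (a v : Fin n → F) (k : ℕ) : Submodule F (Fin n → F) :=
  (degreeLT F k).map (grsEval a v)

lemma finrank_degreeLT (k : ℕ) : Module.finrank F (degreeLT F k) = k := by
  simp [(degreeLTEquiv F k).finrank_eq]

lemma natDegree_lt_of_mem_degreeLT {k : ℕ} {f : F[X]} (hf : f ∈ degreeLT F k) (hf0 : f ≠ 0) :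
    f.natDegree < k :=
  (natDegree_lt_iff_degree_lt hf0).2 (mem_degreeLT.1 hf)

lemma mem_degreeLT_of_natDegree_lt {k : ℕ} {f : F[X]} (hf : f.natDegree < k) :
    f ∈ degreeLT F k :=
  mem_degreeLT.2 (degree_le_natDegree.trans_lt (by exact_mod_cast hf))

variable {a v : Fin n → F} {k : ℕ}

lemma finrank_map_grsEval (ha : Function.Injective a) (hv : ∀ i, v i ≠ 0) (hk : k ≤ n)
    {W : Submodule F F[X]} (hW : W ≤ degreeLT F k) :
    Module.finrank F (W.map (grsEval a v)) = Module.finrank F W := by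
  have hinj : Function.Injective ((grsEval a v).comp W.subtype) := by
    rw [← LinearMap.ker_eq_bot, LinearMap.ker_eq_bot']
    intro f hf
    refine Subtype.ext (eq_zero_of_degree_lt_of_eval_index_eq_zero (s := Finset.univ) ha.injOn
      ?_ fun i _ => ?_)
    · exact (mem_degreeLT.1 (hW f.2)).trans_le (by simpa using hk)
    · simpa [hv i] using congrFun hf i
  rw [← LinearMap.finrank_range_of_inj hinj, LinearMap.range_comp, Submodule.range_subtype]

lemma wt_grsEval [DecidableEq F] (hv : ∀ i, v i ≠ 0) (f : F[X]) :
    wt (grsEval a v f) = #{i | f.eval (a i) ≠ 0} := by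
  simp [wt, hv, ← Set.ncard_coe_finset]

lemma card_filter_eval_eq_zero_le [DecidableEq F] (ha : Function.Injective a) {f : F[X]}
    (hf : f ≠ 0) : #{i | f.eval (a i) = 0} ≤ f.natDegree := by
  rw [← Finset.card_image_of_injective _ ha]
  refine card_le_degree_of_subset_roots fun x hx => ?_
  simp only [Finset.mem_val, Finset.mem_image, Finset.mem_filter] at hx
  obtain ⟨i, ⟨-, hi⟩, rfl⟩ := hx
  exact (mem_roots hf).2 hi

theorem isMDSCode_grsCode (ha : Function.Injective a) (hv : ∀ i, v i ≠ 0) (hk : 1 ≤ k)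
    (hkn : k ≤ n) : IsMDSCode (grsCode a v k) k := by
  classical
  refine ⟨by rw [grsCode, finrank_map_grsEval ha hv hkn le_rfl, finrank_degreeLT], ?_, ?_⟩
  · rintro _ ⟨f, hf, rfl⟩ hx
    have hf0 : f ≠ 0 := by rintro rfl; simp at hx
    have hzeros := card_filter_eval_eq_zero_le ha hf0
    have hdeg := natDegree_lt_of_mem_degreeLT hf hf0
    have hsplit := Finset.card_filter_add_card_filter_not
      (s := Finset.univ) (p := fun i => f.eval (a i) = 0)
    rw [wt_grsEval hv]
    simp only [ne_eq, Finset.card_univ, Fintype.card_fin] at hsplit ⊢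
    omega
  · obtain ⟨T, -, hT⟩ := Finset.exists_subset_card_eq
      (s := (Finset.univ : Finset (Fin n))) (n := k - 1) (by simp; omega)
    have hmem : nodal T a ∈ degreeLT F k := by
      rw [mem_degreeLT, degree_nodal, hT]; exact_mod_cast Nat.sub_lt hk one_pos
    have heval : ∀ i, (nodal T a).eval (a i) = 0 ↔ i ∈ T := fun i =>
      ⟨fun h => by_contra fun hi =>
        eval_nodal_not_at_node (fun j hj hij => hi (by rwa [ha hij])) h,
        fun hi => eval_nodal_at_node hi⟩
    refine ⟨_, ⟨_, hmem, rfl⟩, fun h0 => ?_, ?_⟩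
    · obtain ⟨i, -, hi⟩ := Finset.exists_mem_notMem_of_card_lt_card
        (s := T) (t := Finset.univ) (by simp; omega)
      simpa [hv i, heval, hi] using congrFun h0 i
    · rw [wt_grsEval hv]
      simp only [ne_eq, heval, Finset.filter_not, Finset.filter_mem_eq_inter, Finset.univ_inter,
        Finset.card_sdiff, Finset.inter_univ, hT, Finset.card_univ, Fintype.card_fin]
      omega

end GRS

section GaloisHull

variable {F : Type*} [Field F] {n : ℕ} {a v : Fin n → F} {k : ℕ}

lemma mem_galoisDual_iff (p l : ℕ) [Fact p.Prime] [CharP F p] {C : Submodule F (Fin n → F)}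
    {x : Fin n → F} : x ∈ galoisDual p l C ↔ ∀ y ∈ C, ∑ i, y i * x i ^ p ^ l = 0 :=
  Iff.rfl

lemma sum_nodalWeight_mul_eval_eq_zero (ha : Function.Injective a) {T : F[X]}
    (hT : T.natDegree + 1 < n) : ∑ i, nodalWeight Finset.univ a i * T.eval (a i) = 0 := by
  have hsum := coeff_eq_sum (s := Finset.univ) ha.injOn (P := T)
    (by simpa using degree_le_natDegree.trans_lt (by exact_mod_cast (by omega : T.natDegree < n)))
  rw [coeff_eq_zero_of_natDegree_lt (by simp; omega)] at hsum
  simpa [nodalWeight, div_eq_mul_inv, Finset.prod_inv_distrib, mul_comm] using hsum.symm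

lemma natDegree_mul_pow_add_one_lt {Q : ℕ} (hkn : (k - 1) * (Q + 1) + 1 < n) {f g : F[X]}
    (hf : f ∈ degreeLT F k) (hg : g ∈ degreeLT F k) : (g * f ^ Q).natDegree + 1 < n := by
  have hdeg : ∀ u ∈ degreeLT F k, u.natDegree ≤ k - 1 := fun u hu => by
    rcases eq_or_ne u 0 with rfl | hu0
    · simp
    · have := natDegree_lt_of_mem_degreeLT hu hu0; omega
  calc (g * f ^ Q).natDegree + 1 ≤ (k - 1) + Q * (k - 1) + 1 := by
        gcongr
        exact natDegree_mul_le.trans (add_le_add (hdeg g hg)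
          (natDegree_pow_le.trans (Nat.mul_le_mul_left Q (hdeg f hf))))
    _ = (k - 1) * (Q + 1) + 1 := by ring
    _ < n := hkn

lemma sum_grsEval_mul_pow {S : Finset (Fin n)} {α : F} {Q : ℕ} (ha : Function.Injective a)
    (hv : ∀ i, v i ^ (Q + 1) = (if i ∈ S then α else 1) * nodalWeight Finset.univ a i)
    {f g : F[X]} (hfg : (g * f ^ Q).natDegree + 1 < n) :
    ∑ i, grsEval a v g i * grsEval a v f i ^ Q =
      (α - 1) * ∑ i ∈ S, nodalWeight Finset.univ a i * (g * f ^ Q).eval (a i) := by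
  set w := nodalWeight Finset.univ a
  calc ∑ i, grsEval a v g i * grsEval a v f i ^ Q
      = ∑ i, (w i * (g * f ^ Q).eval (a i) +
          if i ∈ S then (α - 1) * (w i * (g * f ^ Q).eval (a i)) else 0) := by
        refine Finset.sum_congr rfl fun i _ => ?_
        have hvi := hv i
        simp only [grsEval_apply, eval_mul, eval_pow, mul_pow]
        split_ifs at hvi ⊢ <;> linear_combination (g.eval (a i) * f.eval (a i) ^ Q) * hvi
    _ = (α - 1) * ∑ i ∈ S, w i * (g * f ^ Q).eval (a i) := by
        rw [Finset.sum_add_distrib, sum_nodalWeight_mul_eval_eq_zero ha hfg, zero_add,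
          Finset.sum_ite_mem, Finset.univ_inter, Finset.mul_sum]

lemma mem_map_mulLeft_nodal_iff (ha : Function.Injective a) {S : Finset (Fin n)} (hS : #S ≤ k)
    {f : F[X]} :
    f ∈ (degreeLT F (k - #S)).map (LinearMap.mulLeft F (nodal S a)) ↔
      f ∈ degreeLT F k ∧ ∀ i ∈ S, f.eval (a i) = 0 := by
  constructor
  · rintro ⟨g, hg, rfl⟩
    refine ⟨?_, fun i hi => by simp [eval_nodal_at_node hi]⟩
    rcases eq_or_ne g 0 with rfl | hg0
    · simp
    refine mem_degreeLT_of_natDegree_lt ?_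
    have := natDegree_lt_of_mem_degreeLT hg hg0
    simp only [LinearMap.mulLeft_apply, natDegree_mul nodal_ne_zero hg0, natDegree_nodal]
    omega
  · rintro ⟨hf, hfS⟩
    obtain ⟨g, rfl⟩ : nodal S a ∣ f :=
      Finset.prod_dvd_of_coprime ((pairwise_coprime_X_sub_C ha).set_pairwise _)
        fun i hi => dvd_iff_isRoot.2 (hfS i hi)
    refine ⟨g, ?_, rfl⟩
    rcases eq_or_ne g 0 with rfl | hg0
    · exact zero_mem _
    have := natDegree_lt_of_mem_degreeLT hf (mul_ne_zero nodal_ne_zero hg0)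
    rw [natDegree_mul nodal_ne_zero hg0, natDegree_nodal] at this
    exact mem_degreeLT_of_natDegree_lt (by omega)

lemma finrank_map_mulLeft_degreeLT {Z : F[X]} (hZ : Z ≠ 0) (j : ℕ) :
    Module.finrank F ((degreeLT F j).map (LinearMap.mulLeft F Z)) = j := by
  have hinj : Function.Injective (LinearMap.mulLeft F Z) := fun f g h => mul_left_cancel₀ hZ h
  rw [← (Submodule.equivMapOfInjective _ hinj _).finrank_eq, finrank_degreeLT]

variable (p l : ℕ) [Fact p.Prime] [CharP F p] {S : Finset (Fin n)} {α : F}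

theorem galoisHull_grsCode (ha : Function.Injective a) (hα : α ≠ 1)
    (hv : ∀ i, v i ^ (p ^ l + 1) = (if i ∈ S then α else 1) * nodalWeight Finset.univ a i)
    (hS : #S ≤ k) (hkn : (k - 1) * (p ^ l + 1) + 1 < n) :
    galoisHull p l (grsCode a v k) =
      ((degreeLT F (k - #S)).map (LinearMap.mulLeft F (nodal S a))).map (grsEval a v) := by
  have hp : p ≠ 0 := (Fact.out : p.Prime).ne_zero
  have hform : ∀ f ∈ degreeLT F k, ∀ g ∈ degreeLT F k,
      ∑ i, grsEval a v g i * grsEval a v f i ^ p ^ l =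
        (α - 1) * ∑ i ∈ S, nodalWeight Finset.univ a i * (g * f ^ p ^ l).eval (a i) :=
    fun f hf g hg => sum_grsEval_mul_pow ha hv (natDegree_mul_pow_add_one_lt hkn hf hg)
  ext x
  simp only [Submodule.mem_map, mem_map_mulLeft_nodal_iff ha hS, galoisHull, Submodule.mem_inf,
    mem_galoisDual_iff, grsCode]
  constructor
  · rintro ⟨⟨f, hf, rfl⟩, hdual⟩
    refine ⟨f, ⟨hf, fun i₀ hi₀ => ?_⟩, rfl⟩
    -- pairing with the Lagrange basis polynomial of `i₀` on `S` isolates `f (a i₀)`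
    have hbasis : Lagrange.basis S a i₀ ∈ degreeLT F k :=
      mem_degreeLT_of_natDegree_lt (by
        rw [natDegree_basis ha.injOn hi₀]; have := Finset.card_pos.2 ⟨i₀, hi₀⟩; omega)
    have h0 := hdual _ ⟨_, hbasis, rfl⟩
    rw [hform f hf _ hbasis, Finset.sum_eq_single_of_mem i₀ hi₀ fun i hi hne => by
      simp [eval_basis_of_ne hne.symm hi]] at h0
    simpa [eval_basis_self ha.injOn hi₀, sub_ne_zero.2 hα,
      nodalWeight_ne_zero ha.injOn (Finset.mem_univ i₀), hp] using h0
  · rintro ⟨f, ⟨hf, hfS⟩, rfl⟩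
    refine ⟨⟨f, hf, rfl⟩, ?_⟩
    rintro _ ⟨g, hg, rfl⟩
    rw [hform f hf g hg, Finset.sum_eq_zero fun i hi => by simp [hfS i hi, hp], mul_zero]

theorem finrank_galoisHull_grsCode (ha : Function.Injective a) (hv0 : ∀ i, v i ≠ 0)
    (hα : α ≠ 1)
    (hv : ∀ i, v i ^ (p ^ l + 1) = (if i ∈ S then α else 1) * nodalWeight Finset.univ a i)
    (hS : #S ≤ k) (hkn : (k - 1) * (p ^ l + 1) + 1 < n) :
    Module.finrank F (galoisHull p l (grsCode a v k)) = k - #S := by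
  have hW : (degreeLT F (k - #S)).map (LinearMap.mulLeft F (nodal S a)) ≤ degreeLT F k :=
    fun f hf => ((mem_map_mulLeft_nodal_iff ha hS).1 hf).1
  have hk : k ≤ n := by
    have := Nat.le_mul_of_pos_right (k - 1) (by positivity : 0 < p ^ l + 1); omega
  rw [galoisHull_grsCode p l ha hα hv hS hkn, finrank_map_grsEval ha hv0 hk hW,
    finrank_map_mulLeft_degreeLT nodal_ne_zero]

end GaloisHull

section Nodes

lemma eval_derivative_X_mul_comp_X_pow {R : Type*} [CommRing R] (s : R[X]) (m : ℕ) (x : R) :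
    (derivative (X * s.comp (X ^ m))).eval x =
      (s + C (m : R) * X * derivative s).eval (x ^ m) := by
  rcases m with _ | m
  · simp
  · simp [derivative_comp]; ring

lemma map_eval_eq_of_map_eq {R : Type*} [CommRing R] (φ : R →+* R) {s : R[X]}
    (hs : s.map φ = s) {x : R} (hx : φ x = x) : φ (s.eval x) = s.eval x := by
  rw [← eval₂_at_apply, hx, ← eval_map, hs]

variable {F : Type*} [Field F]

lemma map_nodalWeight_eq {ι : Type*} [Fintype ι] [DecidableEq ι] (φ : F →+* F) {a : ι → F}
    {s : F[X]} {m : ℕ} (hs : s.map φ = s) (hnodal : nodal Finset.univ a = X * s.comp (X ^ m))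
    (ha : ∀ i, φ (a i ^ m) = a i ^ m) (i : ι) :
    φ (nodalWeight Finset.univ a i) = nodalWeight Finset.univ a i := by
  have hU : (s + C (m : F) * X * derivative s).map φ = s + C (m : F) * X * derivative s := by
    rw [Polynomial.map_add, Polynomial.map_mul, Polynomial.map_mul, ← derivative_map, hs]
    simp
  rw [nodalWeight_eq_eval_derivative_nodal (Finset.mem_univ i), map_inv₀, hnodal,
    eval_derivative_X_mul_comp_X_pow, map_eval_eq_of_map_eq φ hU (ha i)]

variable {m r : ℕ} {μ ρ : F}

def cosetNodes (μ ρ : F) (r m : ℕ) : Option (Fin r × Fin m) → F :=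
  fun o => o.elim 0 fun jt => ρ ^ (jt.1 : ℕ) * μ ^ (jt.2 : ℕ)

lemma cosetNodes_pow (o : Option (Fin r × Fin m)) (hμ : IsPrimitiveRoot μ m) :
    cosetNodes μ ρ r m o ^ m = o.elim (0 ^ m) fun jt => (ρ ^ m) ^ (jt.1 : ℕ) := by
  rcases o with _ | ⟨j, t⟩
  · rfl
  · have hμt : (μ ^ (t : ℕ)) ^ m = 1 := by rw [← pow_mul, pow_mul', hμ.pow_eq_one, one_pow]
    simp only [cosetNodes, Option.elim_some, mul_pow, hμt, mul_one, ← pow_mul, mul_comm]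

lemma cosetNodes_injective (hμ : IsPrimitiveRoot μ m) (hm : 0 < m) (hρ : ρ ≠ 0)
    (hr : r ≤ orderOf (ρ ^ m)) : Function.Injective (cosetNodes μ ρ r m) := by
  have hne : ∀ jt : Fin r × Fin m, cosetNodes μ ρ r m (some jt) ≠ 0 := fun jt =>
    mul_ne_zero (pow_ne_zero _ hρ) (pow_ne_zero _ (hμ.ne_zero hm.ne'))
  rintro (_ | ⟨j, t⟩) (_ | ⟨j', t'⟩) h
  · rfl
  · exact absurd h.symm (hne _)
  · exact absurd h (hne _)
  have hj : j = j' := by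
    have := congrArg (· ^ m) h
    simp only [cosetNodes_pow _ hμ, Option.elim_some] at this
    exact Fin.ext (pow_injOn_Iio_orderOf (by simp; omega) (by simp; omega) this)
  subst hj
  have ht : μ ^ (t : ℕ) = μ ^ (t' : ℕ) := mul_left_cancel₀ (pow_ne_zero _ hρ) h
  rw [Fin.ext (hμ.pow_inj t.2 t'.2 ht)]

lemma nodal_cosetNodes (hμ : IsPrimitiveRoot μ m) (hm : 0 < m) :
    nodal Finset.univ (cosetNodes μ ρ r m) =
      X * (nodal Finset.univ fun j : Fin r => (ρ ^ m) ^ (j : ℕ)).comp (X ^ m) := by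
  simp only [nodal_eq, Fintype.prod_option, Fintype.prod_prod_type, Polynomial.prod_comp,
    sub_comp, X_comp, C_comp]
  congr 1
  · simp [cosetNodes]
  refine Finset.prod_congr rfl fun j _ => ?_
  rw [X_pow_sub_C_eq_prod hμ hm (by rw [← pow_mul, mul_comm, pow_mul] : (ρ ^ (j : ℕ)) ^ m = _),
    ← Fin.prod_univ_eq_prod_range]
  simp [cosetNodes, mul_comm]

theorem exists_injective_map_nodalWeight_eq (φ : F →+* F) (hμ : IsPrimitiveRoot μ m)
    (hm : 0 < m) (hρ : ρ ≠ 0) (hθ : φ (ρ ^ m) = ρ ^ m) (hr : r ≤ orderOf (ρ ^ m)) :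
    ∃ a : Fin (r * m + 1) → F, Function.Injective a ∧
      ∀ i, φ (nodalWeight Finset.univ a i) = nodalWeight Finset.univ a i := by
  let e : Fin (r * m + 1) ≃ Option (Fin r × Fin m) :=
    (finSuccEquiv _).trans (Equiv.optionCongr finProdFinEquiv.symm)
  have hnodal : nodal Finset.univ (cosetNodes μ ρ r m ∘ e) =
      nodal Finset.univ (cosetNodes μ ρ r m) := by
    simp only [nodal_eq, Function.comp_apply]
    exact e.prod_comp fun o => X - C (cosetNodes μ ρ r m o)
  refine ⟨cosetNodes μ ρ r m ∘ e, (cosetNodes_injective hμ hm hρ hr).comp e.injective,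
    map_nodalWeight_eq φ ?_ (hnodal.trans (nodal_cosetNodes hμ hm)) fun i => ?_⟩
  · rw [nodal_eq, Polynomial.map_prod]
    exact Finset.prod_congr rfl fun j _ => by rw [Polynomial.map_sub, map_X, map_C, map_pow, hθ]
  · rw [Function.comp_apply, cosetNodes_pow _ hμ]
    rcases e i with _ | ⟨j, t⟩ <;> simp [hθ]

end Nodes

lemma IsCyclic.exists_pow_eq_of_pow_card_div_eq_one {G : Type*} [CommGroup G] [IsCyclic G]
    [Finite G] {d : ℕ} (hd : d ∣ Nat.card G) {x : G} (hx : x ^ (Nat.card G / d) = 1) :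
    ∃ w, w ^ d = x := by
  obtain ⟨ζ, hζ⟩ := IsCyclic.exists_generator (α := G)
  obtain ⟨s, rfl⟩ := Submonoid.mem_powers_iff _ _ |>.1 (mem_powers_iff_mem_zpowers.2 (hζ x))
  have hN : 0 < Nat.card G / d := Nat.div_pos (Nat.le_of_dvd Nat.card_pos hd)
    (Nat.pos_of_dvd_of_pos hd Nat.card_pos)
  have hdvd : d * (Nat.card G / d) ∣ s * (Nat.card G / d) := by
    have := orderOf_dvd_of_pow_eq_one (by rw [pow_mul, hx] : ζ ^ (s * (Nat.card G / d)) = 1)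
    rw [Nat.mul_div_cancel' hd]
    rwa [orderOf_eq_card_of_forall_mem_zpowers hζ] at this
  obtain ⟨t, rfl⟩ := Nat.dvd_of_mul_dvd_mul_right hN hdvd
  exact ⟨ζ ^ t, by rw [← pow_mul, mul_comm]⟩

lemma orderOf_pow_pow_div_gcd_mul {G : Type*} [Monoid G] {ζ : G} {y c m : ℕ}
    (hζ : orderOf ζ = y * c) (hy : 0 < y) (hm : m ∣ y * c) (hm0 : 0 < m) :
    orderOf ((ζ ^ (y / m.gcd y)) ^ m) * (m / m.gcd y) = c := by
  have hg : 0 < m.gcd y := Nat.gcd_pos_of_pos_left _ hm0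
  have hm₁ : 0 < m / m.gcd y := Nat.div_pos (Nat.gcd_le_left y hm0) hg
  obtain ⟨c', rfl⟩ : m / m.gcd y ∣ c :=
    (Nat.div_dvd_iff_dvd_mul (Nat.gcd_dvd_left m y) hg).2 (Nat.dvd_gcd_mul_iff_dvd_mul.2 hm)
  have hexp : y / m.gcd y * m = y * (m / m.gcd y) := by
    rw [Nat.div_mul_right_comm (Nat.gcd_dvd_right m y), Nat.mul_div_assoc _ (Nat.gcd_dvd_left m y)]
  rw [← pow_mul, hexp, orderOf_pow_of_dvd (by positivity)
      (by rw [hζ, ← mul_assoc]; exact dvd_mul_right _ _),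
    hζ, ← mul_assoc, Nat.mul_div_cancel_left _ (by positivity), mul_comm]

section FiniteField

variable {F : Type*} [Field F] [Finite F]

lemma exists_pow_add_one_eq_of_pow_eq_self {Q : ℕ} (hQ : Q ^ 2 - 1 ∣ Nat.card F - 1) {x : F}
    (hx0 : x ≠ 0) (hx : x ^ Q = x) : ∃ w : F, w ^ (Q + 1) = x := by
  have hq : 0 < Nat.card F - 1 := Nat.sub_pos_of_lt Finite.one_lt_card
  have hQ0 : Q ≠ 0 := by rintro rfl; exact hq.ne' (zero_dvd_iff.1 hQ)
  obtain ⟨N, hN⟩ := hQ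
  rw [show Q ^ 2 - 1 = (Q + 1) * (Q - 1) by simpa using Nat.sq_sub_sq Q 1, mul_assoc] at hN
  have hx1 : Units.mk0 x hx0 ^ (Q - 1) = 1 := Units.ext <| mul_right_cancel₀ hx0 <| by
    simp [pow_sub_one_mul hQ0, hx]
  obtain ⟨w, hw⟩ := IsCyclic.exists_pow_eq_of_pow_card_div_eq_one (x := Units.mk0 x hx0)
    (d := Q + 1) (by rw [Nat.card_units, hN]; exact dvd_mul_right _ _)
    (by rw [Nat.card_units, hN, Nat.mul_div_cancel_left _ (Nat.succ_pos Q), pow_mul, hx1,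
      one_pow])
  exact ⟨w, by simpa using congrArg Units.val hw⟩

lemma exists_pow_add_one_eq_ite_mul {ι : Type*} [DecidableEq ι] {Q : ℕ}
    (hQ : Q ^ 2 - 1 ∣ Nat.card F - 1) {u : ι → F} (hu0 : ∀ i, u i ≠ 0)
    (hu : ∀ i, u i ^ Q = u i) (S : Finset ι) {α : F} (hα0 : α ≠ 0) (hα : α ^ Q = α) :
    ∃ v : ι → F, (∀ i, v i ≠ 0) ∧ ∀ i, v i ^ (Q + 1) = (if i ∈ S then α else 1) * u i := by
  have hc : ∀ i, (if i ∈ S then α else 1) * u i ≠ 0 := fun i =>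
    mul_ne_zero (by split_ifs <;> simp [hα0]) (hu0 i)
  choose v hv using fun i => exists_pow_add_one_eq_of_pow_eq_self hQ (hc i) <| by
    rw [mul_pow, hu i]; split_ifs <;> simp [hα]
  exact ⟨v, fun i h0 => hc i (by rw [← hv i, h0, zero_pow (Nat.succ_ne_zero _)]), hv⟩

theorem exists_injective_nodalWeight_pow_eq (p l : ℕ) [Fact p.Prime] [CharP F p] {m r : ℕ}
    (hQ : p ^ l - 1 ∣ Nat.card F - 1) (hm : m ∣ Nat.card F - 1)
    (hr : r ≤ (p ^ l - 1) / (m / m.gcd ((Nat.card F - 1) / (p ^ l - 1)))) :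
    ∃ a : Fin (r * m + 1) → F, Function.Injective a ∧
      ∀ i, nodalWeight Finset.univ a i ^ p ^ l = nodalWeight Finset.univ a i := by
  have hq : 0 < Nat.card F - 1 := Nat.sub_pos_of_lt Finite.one_lt_card
  have hm0 : 0 < m := Nat.pos_of_dvd_of_pos hm hq
  set y := (Nat.card F - 1) / (p ^ l - 1)
  have hyc : y * (p ^ l - 1) = Nat.card F - 1 := Nat.div_mul_cancel hQ
  have hy : 0 < y := Nat.pos_of_ne_zero fun h => by rw [h, zero_mul] at hyc; omega
  obtain ⟨ζ, hζ⟩ := IsCyclic.exists_ofOrder_eq_natCard (α := Fˣ)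
  rw [Nat.card_units] at hζ
  have hμ : IsPrimitiveRoot ((ζ ^ (orderOf ζ / m) : Fˣ) : F) m := by
    rw [IsPrimitiveRoot.coe_units_iff]
    convert IsPrimitiveRoot.orderOf (ζ ^ (orderOf ζ / m))
    exact (orderOf_pow_orderOf_div (by omega) (hζ ▸ hm)).symm
  have hθ := orderOf_pow_pow_div_gcd_mul (hζ.trans hyc.symm) hy (hyc ▸ hm) hm0
  set ρ := ζ ^ (y / m.gcd y)
  have hfixθ : iterateFrobenius F p l ((ρ : F) ^ m) = (ρ : F) ^ m := by
    have h1 : (ρ ^ m) ^ (p ^ l - 1) = 1 := orderOf_dvd_iff_pow_eq_one.1 (Dvd.intro _ hθ)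
    rw [iterateFrobenius_def, ← Units.val_pow_eq_pow_val, ← Units.val_pow_eq_pow_val,
      ← pow_sub_one_mul (pow_ne_zero l (Fact.out : p.Prime).ne_zero), h1, one_mul]
  have hrθ : r ≤ orderOf ((ρ : F) ^ m) := by
    rwa [← Units.val_pow_eq_pow_val, orderOf_units, Nat.eq_div_of_mul_eq_left
      (Nat.div_pos (Nat.gcd_le_left y hm0) (Nat.gcd_pos_of_pos_left y hm0)).ne' hθ]
  obtain ⟨a, ha, hfix⟩ := exists_injective_map_nodalWeight_eq (iterateFrobenius F p l) hμ hm0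
    (Units.ne_zero ρ) hfixθ hrθ
  exact ⟨a, ha, fun i => by simpa [iterateFrobenius_def] using hfix i⟩

end FiniteField

lemma sub_one_mul_add_one_le_of_le_div {Q n k : ℕ} (hk1 : 1 ≤ k)
    (hk2 : k ≤ (Q + n) / (Q + 1)) : (k - 1) * (Q + 1) + 1 ≤ n := by
  have h1 : k * (Q + 1) ≤ Q + n := (Nat.le_div_iff_mul_le (Nat.succ_pos Q)).1 hk2
  have h2 : Q ≤ k * Q := Nat.le_mul_of_pos_left Q hk1
  rw [Nat.sub_one_mul, mul_add_one] at *
  omega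

theorem exists_mds_code_galoisHull_dim_thm4_2_general
    (p e l m r n k h : ℕ) [Fact p.Prime] (hodd : Odd p) (he : 0 < e)
    (h2l : 2 * l ∣ e) (hm : m ∣ p ^ e - 1)
    (hr2 : r ≤ (p ^ l - 1) / (m / Nat.gcd m ((p ^ e - 1) / (p ^ l - 1))))
    (hn : n = r * m)
    (hk1 : 1 ≤ k) (hk2 : k ≤ (p ^ l + n) / (p ^ l + 1)) (hh : h ≤ k) :
    ∃ C : Submodule (GaloisField p e) (Fin (n + 1) → GaloisField p e),
      IsMDSCode C k ∧
      Module.finrank (GaloisField p e) (galoisHull p l C) = h := by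
  subst hn
  have hcard : Nat.card (GaloisField p e) = p ^ e := GaloisField.card p e he.ne'
  have hQ2 : (p ^ l) ^ 2 - 1 ∣ Nat.card (GaloisField p e) - 1 := by
    rw [hcard, ← pow_mul, mul_comm]; exact Nat.pow_sub_one_dvd_pow_sub_one p h2l
  have hQ : p ^ l - 1 ∣ Nat.card (GaloisField p e) - 1 :=
    (Nat.sub_one_dvd_pow_sub_one (p ^ l) 2).trans hQ2
  have hkn := sub_one_mul_add_one_le_of_le_div hk1 hk2
  have hk : k ≤ r * m + 1 := by
    have := Nat.le_mul_of_pos_right (k - 1) (by positivity : 0 < p ^ l + 1); omega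
  obtain ⟨a, ha, hfix⟩ := exists_injective_nodalWeight_pow_eq p l hQ (hcard ▸ hm) (hcard ▸ hr2)
  obtain ⟨S, -, hS⟩ := Finset.exists_subset_card_eq
    (s := (Finset.univ : Finset (Fin (r * m + 1)))) (n := k - h) (by simp; omega)
  obtain ⟨v, hv0, hv⟩ := exists_pow_add_one_eq_ite_mul hQ2
    (fun i => nodalWeight_ne_zero ha.injOn (Finset.mem_univ i)) hfix S (α := -1)
    (neg_ne_zero.2 one_ne_zero) hodd.pow.neg_one_pow
  have hα : (-1 : GaloisField p e) ≠ 1 := Ring.neg_one_ne_one_of_char_ne_two <| by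
    rw [ringChar.eq (GaloisField p e) p]; rintro rfl; exact Nat.not_even_iff_odd.2 hodd even_two
  refine ⟨grsCode a v k, isMDSCode_grsCode ha hv0 hk1 hk, ?_⟩
  rw [finrank_galoisHull_grsCode p l ha hv0 hα hv (by omega) (by omega), hS]
  omega

/-- Theorem 4(2): let `q = p^e` with `p` an odd prime and `2l ∣ e`.
Set `y = (q-1)/(p^l-1)`, let `m ∣ q-1`, `m₁ = m / gcd(m, y)`, and `n = r m` with
`1 ≤ r ≤ (p^l-1)/m₁`.  Then for every `1 ≤ k ≤ ⌊(p^l + n)/(p^l + 1)⌋` and every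
admissible `h` there is an `[n + 1, k]_q` MDS code whose `l`-Galois hull has
dimension exactly `h`. -/
theorem exists_mds_code_galoisHull_dim_thm4_2
    (p e l m r n k h : ℕ) [Fact p.Prime] (hodd : Odd p) (he : 0 < e)
    (h2l : 2 * l ∣ e) (hm : m ∣ p ^ e - 1)
    (hr1 : 1 ≤ r)
    (hr2 : r ≤ (p ^ l - 1) / (m / Nat.gcd m ((p ^ e - 1) / (p ^ l - 1))))
    (hn : n = r * m)
    (hk1 : 1 ≤ k) (hk2 : k ≤ (p ^ l + n) / (p ^ l + 1)) (hh : h ≤ k) :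
    ∃ C : Submodule (GaloisField p e) (Fin (n + 1) → GaloisField p e),
      IsMDSCode C k ∧
      Module.finrank (GaloisField p e) (galoisHull p l C) = h :=
  exists_mds_code_galoisHull_dim_thm4_2_general p e l m r n k h hodd he h2l hm hr2 hn hk1 hk2 hh
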